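/- Let G be a locally finite connected graph, α ∈ [0,1], and let (A_t) be a system of coalescing continuous-time simple random walks on G with |A_∞| = lim_{t→∞}|A_t|. The set function A ↦ E_A[α^{|A_∞|}], defined on finite subsets of V, determines (via inclusion–exclusion) a unique probability measure μ_α on {0,1}^V with μ_α(η : η ≡ 1 on A) = E_A[α^{|A_∞|}] for all finite A, and if the voter model is started from the Bernoulli(α) product measure π_α, its law at time t converges weakly to μ_α as t → ∞. -/

import Mathlib

set_option linter.unusedSectionVars false

open MeasureTheory ProbabilityTheory Filter Set
open scoped Classical Topology BoundedContinuousFunction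

noncomputable section

def genApply {S : Type*} (r : S → S → NNReal) (f : S → ℝ) (x : S) : ℝ :=
  ∑' y, (r x y : ℝ) * (f y - f x)

/-- Continuous-time Markov chain with jump-rate kernel `r`, via the martingale
problem with respect to the natural filtration. -/
def IsCTMC {Ω S : Type*} [MeasurableSpace Ω] (P : Measure Ω) (r : S → S → NNReal)
    (X : ℝ → Ω → S) : Prop :=
  (∀ t, @Measurable Ω S _ ⊤ (X t)) ∧
  ∀ f : S → ℝ, (∃ C, ∀ x, |f x| ≤ C) →
    ∀ s t : ℝ, 0 ≤ s → s ≤ t →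
      ∀ A : Set Ω,
        MeasurableSet[⨆ u ∈ Set.Icc (0:ℝ) s, MeasurableSpace.comap (X u) ⊤] A →
        ∫ ω in A, (f (X t ω) - ∫ u in Set.Ioc (0:ℝ) t, genApply r f (X u ω)) ∂P =
        ∫ ω in A, (f (X s ω) - ∫ u in Set.Ioc (0:ℝ) s, genApply r f (X u ω)) ∂P

/-- Jump rates of the set-valued system of coalescing simple random walks on a
locally finite graph `G`: a walker at `x ∈ A` jumps to a uniform neighbour `y`;
if `y ∉ A` the set becomes `(A \ {x}) ∪ {y}`, and jumps onto occupied neighbours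
produce coalescence `A \ {x}`. -/
def coalRate {V : Type*} [DecidableEq V] (G : SimpleGraph V) [G.LocallyFinite]
    (A B : Finset V) : NNReal :=
  (∑ x ∈ A, ∑' y : V,
      if G.Adj x y ∧ y ∉ A ∧ B = insert y (A.erase x) then (1 : NNReal) / (G.degree x) else 0)
  + ∑ x ∈ A, if B = A.erase x then
      (∑' y : V, if G.Adj x y ∧ y ∈ A then (1 : NNReal) / (G.degree x) else 0) else 0


namespace Stmt5Aux

variable {V : Type*} [Countable V] [DecidableEq V]

/-- the cylinder set: `true` on `T`, `false` on `F`. -/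
def cylSet (T F : Finset V) : Set (V → Bool) :=
  {η | (∀ v ∈ T, η v = true) ∧ ∀ v ∈ F, η v = false}

lemma measurableSet_cylSet (T F : Finset V) : MeasurableSet (cylSet T F) := by
  have h1 : cylSet T F = (⋂ v ∈ (T : Set V), {η : V → Bool | η v = true}) ∩
      ⋂ v ∈ (F : Set V), {η : V → Bool | η v = false} := by
    ext η; simp [cylSet, Set.mem_iInter]
  rw [h1]
  refine MeasurableSet.inter ?_ ?_ <;>
  · refine MeasurableSet.biInter (Set.to_countable _) (fun v _ => ?_)
    exact (measurable_pi_apply v) (measurableSet_singleton _)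

variable (p : Finset V → Finset V → ℝ) (enc : V → ℕ) (henc : Function.Injective enc)

def Vfin (n : ℕ) : Finset V := (Finset.range n).preimage enc henc.injOn

lemma mem_Vfin {n : ℕ} {v : V} : v ∈ Vfin enc henc n ↔ enc v < n := by
  simp [Vfin]

/-- `q n T` : probability of pattern `T` on `Vfin n`. -/
def q (n : ℕ) (T : Finset V) : ℝ := p T (Vfin enc henc n \ T)

/-- the state after `n` steps: left endpoint of current interval and current pattern. -/
def stx : ℕ → ℝ → ℝ × Finset V
  | 0 => fun _ => (0, ∅)
  | n + 1 => fun x =>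
      let s := (stx n x).1
      let T := (stx n x).2
      if h : ∃ v, enc v = n then
        let θ := s + q p enc henc (n + 1) (insert h.choose T)
        if x < θ then (s, insert h.choose T) else (θ, T)
      else (s, T)

def etaF (x : ℝ) : V → Bool := fun v => decide (v ∈ (stx p enc henc (enc v + 1) x).2)


/-- bundle of hypotheses on the cylinder function `p`. -/
structure PHyp (p : Finset V → Finset V → ℝ) : Prop where
  zero : p ∅ ∅ = 1
  nonneg : ∀ T F : Finset V, Disjoint T F → 0 ≤ p T F
  add : ∀ (T F : Finset V) (v : V), Disjoint T F → v ∉ T → v ∉ F →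
    p T F = p (insert v T) F + p T (insert v F)

lemma not_mem_Vfin_self {v : V} {n : ℕ} (h : enc v = n) : v ∉ Vfin enc henc n := by
  simp [mem_Vfin, h]

lemma Vfin_succ_of {v : V} {n : ℕ} (h : enc v = n) :
    Vfin enc henc (n + 1) = insert v (Vfin enc henc n) := by
  ext u
  simp only [mem_Vfin, Finset.mem_insert, Nat.lt_succ_iff_lt_or_eq]
  constructor
  · rintro (hu | hu)
    · exact Or.inr (by simpa [mem_Vfin] using hu)
    · exact Or.inl (henc (hu.trans h.symm))
  · rintro (rfl | hu)
    · exact Or.inr h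
    · exact Or.inl (by simpa [mem_Vfin] using hu)

lemma Vfin_succ_of_not {n : ℕ} (h : ¬∃ v, enc v = n) :
    Vfin enc henc (n + 1) = Vfin enc henc n := by
  ext u
  simp only [mem_Vfin, Nat.lt_succ_iff_lt_or_eq]
  exact ⟨fun hu => hu.resolve_right (fun he => h ⟨u, he⟩), Or.inl⟩

lemma q_nonneg (hp : PHyp p) (n : ℕ) (T : Finset V) : 0 ≤ q p enc henc n T :=
  hp.nonneg _ _ (Finset.disjoint_sdiff)

lemma q_zero (hp : PHyp p) : q p enc henc 0 ∅ = 1 := by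
  have : Vfin enc henc 0 = ∅ := by ext u; simp [mem_Vfin]
  simp [q, this, hp.zero]

lemma q_succ_split (hp : PHyp p) {v : V} {n : ℕ} (h : enc v = n) {T : Finset V}
    (hT : T ⊆ Vfin enc henc n) :
    q p enc henc n T = q p enc henc (n + 1) (insert v T) + q p enc henc (n + 1) T := by
  have hv : v ∉ Vfin enc henc n := not_mem_Vfin_self enc henc h
  have hvT : v ∉ T := fun hmem => hv (hT hmem)
  have h1 : p T (Vfin enc henc n \ T) =
      p (insert v T) (Vfin enc henc n \ T) + p T (insert v (Vfin enc henc n \ T)) :=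
    hp.add _ _ v Finset.disjoint_sdiff hvT (fun hc => hv (Finset.mem_sdiff.1 hc).1)
  have h2 : Vfin enc henc (n + 1) \ insert v T = Vfin enc henc n \ T := by
    ext u
    simp only [Vfin_succ_of enc henc h, Finset.mem_sdiff, Finset.mem_insert]
    constructor
    · rintro ⟨rfl | hu, hn⟩
      · exact absurd (Or.inl rfl) hn
      · exact ⟨hu, fun hT' => hn (Or.inr hT')⟩
    · rintro ⟨hu, hn⟩
      exact ⟨Or.inr hu, fun hc => hc.elim (fun e => hv (e ▸ hu)) hn⟩
  have h3 : Vfin enc henc (n + 1) \ T = insert v (Vfin enc henc n \ T) := by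
    ext u
    simp only [Vfin_succ_of enc henc h, Finset.mem_sdiff, Finset.mem_insert]
    constructor
    · rintro ⟨rfl | hu, hn⟩
      · exact Or.inl rfl
      · exact Or.inr ⟨hu, hn⟩
    · rintro (rfl | ⟨hu, hn⟩)
      · exact ⟨Or.inl rfl, hvT⟩
      · exact ⟨Or.inr hu, hn⟩
  simp only [q, h2, h3]
  exact h1

lemma q_succ_of_not {n : ℕ} (h : ¬∃ v, enc v = n) (T : Finset V) :
    q p enc henc (n + 1) T = q p enc henc n T := by
  simp [q, Vfin_succ_of_not enc henc h]

lemma stx_succ (n : ℕ) (x : ℝ) :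
    stx p enc henc (n + 1) x =
      if h : ∃ v, enc v = n then
        (if x < (stx p enc henc n x).1 +
            q p enc henc (n + 1) (insert h.choose (stx p enc henc n x).2) then
          ((stx p enc henc n x).1, insert h.choose (stx p enc henc n x).2)
        else
          ((stx p enc henc n x).1 +
            q p enc henc (n + 1) (insert h.choose (stx p enc henc n x).2),
            (stx p enc henc n x).2))
      else stx p enc henc n x := rfl

lemma stx_succ_pos {n : ℕ} {x : ℝ} (h : ∃ v, enc v = n)
    (hlt : x < (stx p enc henc n x).1 +
      q p enc henc (n + 1) (insert h.choose (stx p enc henc n x).2)) :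
    stx p enc henc (n + 1) x =
      ((stx p enc henc n x).1, insert h.choose (stx p enc henc n x).2) := by
  rw [stx_succ, dif_pos h, if_pos hlt]

lemma stx_succ_pos' {n : ℕ} {x : ℝ} (h : ∃ v, enc v = n)
    (hlt : ¬ x < (stx p enc henc n x).1 +
      q p enc henc (n + 1) (insert h.choose (stx p enc henc n x).2)) :
    stx p enc henc (n + 1) x =
      ((stx p enc henc n x).1 +
        q p enc henc (n + 1) (insert h.choose (stx p enc henc n x).2),
        (stx p enc henc n x).2) := by
  rw [stx_succ, dif_pos h, if_neg hlt]

lemma stx_succ_neg {n : ℕ} {x : ℝ} (h : ¬ ∃ v, enc v = n) :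
    stx p enc henc (n + 1) x = stx p enc henc n x := by
  rw [stx_succ, dif_neg h]

lemma stx_snd_subset (n : ℕ) (x : ℝ) : (stx p enc henc n x).2 ⊆ Vfin enc henc n := by
  induction n with
  | zero => simp [stx]
  | succ n ih =>
    by_cases h : ∃ v, enc v = n
    · have hv : enc h.choose = n := h.choose_spec
      rw [Vfin_succ_of enc henc hv]
      by_cases hlt : x < (stx p enc henc n x).1 +
          q p enc henc (n + 1) (insert h.choose (stx p enc henc n x).2)
      · rw [stx_succ_pos p enc henc h hlt]
        exact Finset.insert_subset_insert _ ih
      · rw [stx_succ_pos' p enc henc h hlt]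
        exact ih.trans (Finset.subset_insert _ _)
    · rw [stx_succ_neg p enc henc h, Vfin_succ_of_not enc henc h]
      exact ih

lemma stx_invariant (hp : PHyp p) (n : ℕ) {x : ℝ} (hx : x ∈ Set.Ico (0:ℝ) 1) :
    (stx p enc henc n x).1 ≤ x ∧
      x < (stx p enc henc n x).1 + q p enc henc n (stx p enc henc n x).2 := by
  obtain ⟨hx0, hx1⟩ := hx
  induction n with
  | zero =>
    refine ⟨hx0, ?_⟩
    have : (stx p enc henc 0 x).2 = ∅ := rfl
    rw [this, q_zero p enc henc hp]
    simpa [stx] using hx1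
  | succ n ih =>
    obtain ⟨ih1, ih2⟩ := ih
    by_cases h : ∃ v, enc v = n
    · have hsplit : q p enc henc n (stx p enc henc n x).2 =
          q p enc henc (n + 1) (insert h.choose (stx p enc henc n x).2) +
          q p enc henc (n + 1) (stx p enc henc n x).2 :=
        q_succ_split p enc henc hp h.choose_spec (stx_snd_subset p enc henc n x)
      by_cases hlt : x < (stx p enc henc n x).1 +
          q p enc henc (n + 1) (insert h.choose (stx p enc henc n x).2)
      · rw [stx_succ_pos p enc henc h hlt]
        exact ⟨ih1, hlt⟩
      · rw [stx_succ_pos' p enc henc h hlt]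
        refine ⟨not_lt.1 hlt, ?_⟩
        simp only
        rw [hsplit] at ih2
        linarith
    · rw [stx_succ_neg p enc henc h, q_succ_of_not p enc henc h]
      exact ⟨ih1, ih2⟩

lemma sum_q_powerset (hp : PHyp p) (n : ℕ) :
    ∑ T ∈ (Vfin enc henc n).powerset, q p enc henc n T = 1 := by
  induction n with
  | zero =>
    have h0 : Vfin enc henc 0 = ∅ := by ext u; simp [mem_Vfin]
    rw [h0, Finset.powerset_empty, Finset.sum_singleton, q_zero p enc henc hp]
  | succ n ih =>
    by_cases h : ∃ v, enc v = n
    · have hv : h.choose ∉ Vfin enc henc n := not_mem_Vfin_self enc henc h.choose_spec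
      rw [Vfin_succ_of enc henc h.choose_spec, Finset.sum_powerset_insert hv,
        ← Finset.sum_add_distrib]
      rw [← ih]
      refine Finset.sum_congr rfl (fun T hT => ?_)
      rw [q_succ_split p enc henc hp h.choose_spec (Finset.mem_powerset.1 hT)]
      ring
    · rw [Vfin_succ_of_not enc henc h]
      rw [← ih]
      exact Finset.sum_congr rfl (fun T _ => q_succ_of_not p enc henc h T)

lemma stx_fst_eq_of_snd_eq (hp : PHyp p) (n : ℕ) {x y : ℝ} (hx : x ∈ Set.Ico (0:ℝ) 1)
    (hy : y ∈ Set.Ico (0:ℝ) 1) (h : (stx p enc henc n x).2 = (stx p enc henc n y).2) :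
    (stx p enc henc n x).1 = (stx p enc henc n y).1 := by
  induction n with
  | zero => rfl
  | succ n ih =>
    by_cases hex : ∃ v, enc v = n
    · have hvx : hex.choose ∉ (stx p enc henc n x).2 :=
        fun hc => not_mem_Vfin_self enc henc hex.choose_spec (stx_snd_subset p enc henc n x hc)
      have hvy : hex.choose ∉ (stx p enc henc n y).2 :=
        fun hc => not_mem_Vfin_self enc henc hex.choose_spec (stx_snd_subset p enc henc n y hc)
      by_cases hltx : x < (stx p enc henc n x).1 +
          q p enc henc (n + 1) (insert hex.choose (stx p enc henc n x).2) <;>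
      by_cases hlty : y < (stx p enc henc n y).1 +
          q p enc henc (n + 1) (insert hex.choose (stx p enc henc n y).2)
      · rw [stx_succ_pos p enc henc hex hltx, stx_succ_pos p enc henc hex hlty] at h ⊢
        simp only at h ⊢
        exact ih (by rw [← Finset.erase_insert hvx, ← Finset.erase_insert hvy, h])
      · rw [stx_succ_pos p enc henc hex hltx, stx_succ_pos' p enc henc hex hlty] at h
        simp only at h
        have hmem : hex.choose ∈ (stx p enc henc n y).2 := by
          rw [← h]; exact Finset.mem_insert_self _ _
        exact absurd hmem hvy
      · rw [stx_succ_pos' p enc henc hex hltx, stx_succ_pos p enc henc hex hlty] at h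
        simp only at h
        have hmem : hex.choose ∈ (stx p enc henc n x).2 := by
          rw [h]; exact Finset.mem_insert_self _ _
        exact absurd hmem hvx
      · rw [stx_succ_pos' p enc henc hex hltx, stx_succ_pos' p enc henc hex hlty] at h ⊢
        simp only at h ⊢
        rw [ih h, h]
    · rw [stx_succ_neg p enc henc (x := x) hex, stx_succ_neg p enc henc (x := y) hex] at h ⊢
      exact ih h

lemma measurable_piecewise_countable {ι : Type*} [Countable ι] {α β : Type*}
    [MeasurableSpace α] [MeasurableSpace β] (A : ι → Set α) (hA : ∀ i, MeasurableSet (A i))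
    (hcov : ∀ x, ∃ i, x ∈ A i) (g : α → β) (gi : ι → α → β) (hgi : ∀ i, Measurable (gi i))
    (hagree : ∀ i x, x ∈ A i → g x = gi i x) : Measurable g := by
  intro s hs
  have : g ⁻¹' s = ⋃ i, A i ∩ gi i ⁻¹' s := by
    ext x
    simp only [Set.mem_preimage, Set.mem_iUnion, Set.mem_inter_iff]
    constructor
    · intro hx
      obtain ⟨i, hi⟩ := hcov x
      exact ⟨i, hi, by rwa [← hagree i x hi]⟩
    · rintro ⟨i, hi, hgx⟩
      rwa [hagree i x hi]
  rw [this]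
  exact MeasurableSet.iUnion (fun i => (hA i).inter ((hgi i) hs))

lemma stx_measurable (n : ℕ) :
    Measurable (fun x => (stx p enc henc n x).1) ∧
      ∀ T : Finset V, MeasurableSet {x : ℝ | (stx p enc henc n x).2 = T} := by
  induction n with
  | zero =>
    constructor
    · exact measurable_const
    · intro T
      by_cases hT : T = ∅ <;> simp [stx, hT, eq_comm (a := (∅ : Finset V))]
  | succ n ih =>
    obtain ⟨ihf, ihs⟩ := ih
    by_cases h : ∃ v, enc v = n
    · set v := h.choose with hvdef
      have hvsub : ∀ x, v ∉ (stx p enc henc n x).2 :=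
        fun x hc => not_mem_Vfin_self enc henc h.choose_spec (stx_snd_subset p enc henc n x hc)
      constructor
      · refine measurable_piecewise_countable (fun T => {x : ℝ | (stx p enc henc n x).2 = T})
          ihs (fun x => ⟨_, rfl⟩) _
          (fun T => fun x => if x < (stx p enc henc n x).1 + q p enc henc (n+1) (insert v T)
            then (stx p enc henc n x).1
            else (stx p enc henc n x).1 + q p enc henc (n+1) (insert v T)) (fun T => ?_) ?_
        · refine Measurable.ite ?_ ihf (ihf.add_const _)
          exact measurableSet_lt measurable_id (ihf.add_const _)
        · intro T x hx
          simp only [Set.mem_setOf_eq] at hx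
          subst hx
          by_cases hlt : x < (stx p enc henc n x).1 +
              q p enc henc (n + 1) (insert v (stx p enc henc n x).2)
          · rw [stx_succ_pos p enc henc h hlt]
            simp [hlt]
          · rw [stx_succ_pos' p enc henc h hlt]
            simp [hlt]
            rfl
      · intro T'
        by_cases hvT' : v ∈ T'
        · have hset : {x : ℝ | (stx p enc henc (n+1) x).2 = T'} =
              {x : ℝ | (stx p enc henc n x).2 = T'.erase v} ∩
              {x : ℝ | x < (stx p enc henc n x).1 + q p enc henc (n+1) T'} := by
            ext x
            simp only [Set.mem_setOf_eq, Set.mem_inter_iff]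
            constructor
            · intro hx
              by_cases hlt : x < (stx p enc henc n x).1 +
                  q p enc henc (n + 1) (insert v (stx p enc henc n x).2)
              · rw [stx_succ_pos p enc henc h hlt] at hx
                simp only at hx
                have h2 : (stx p enc henc n x).2 = T'.erase v := by
                  rw [← hx, Finset.erase_insert (hvsub x)]
                refine ⟨h2, ?_⟩
                rwa [← hx]
              · rw [stx_succ_pos' p enc henc h hlt] at hx
                simp only at hx
                exact absurd (hx ▸ hvT') (hvsub x)
            · rintro ⟨h2, hlt⟩
              have hins : insert v (stx p enc henc n x).2 = T' := by
                rw [h2, Finset.insert_erase hvT']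
              rw [stx_succ_pos p enc henc h (by rwa [hins])]
              simpa using hins
          rw [hset]
          exact (ihs _).inter (measurableSet_lt measurable_id (ihf.add_const _))
        · have hset : {x : ℝ | (stx p enc henc (n+1) x).2 = T'} =
              {x : ℝ | (stx p enc henc n x).2 = T'} ∩
              {x : ℝ | ¬ x < (stx p enc henc n x).1 + q p enc henc (n+1) (insert v T')} := by
            ext x
            simp only [Set.mem_setOf_eq, Set.mem_inter_iff]
            constructor
            · intro hx
              by_cases hlt : x < (stx p enc henc n x).1 +
                  q p enc henc (n + 1) (insert v (stx p enc henc n x).2)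
              · rw [stx_succ_pos p enc henc h hlt] at hx
                simp only at hx
                exact absurd (hx ▸ Finset.mem_insert_self v _) hvT'
              · rw [stx_succ_pos' p enc henc h hlt] at hx
                simp only at hx
                subst hx
                exact ⟨rfl, hlt⟩
            · rintro ⟨h2, hlt⟩
              rw [stx_succ_pos' p enc henc h (by rwa [h2])]
              exact h2
          rw [hset]
          exact (ihs _).inter
            ((measurableSet_lt measurable_id (ihf.add_const _)).compl)
    · constructor
      · simpa only [stx_succ_neg p enc henc h] using ihf
      · intro T
        simpa only [stx_succ_neg p enc henc h] using ihs T

lemma stx_snd_mem_stable {n m : ℕ} (hnm : n ≤ m) (x : ℝ) {v : V} (hv : enc v < n) :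
    v ∈ (stx p enc henc m x).2 ↔ v ∈ (stx p enc henc n x).2 := by
  induction m, hnm using Nat.le_induction with
  | base => rfl
  | succ m hnm ih =>
    have hvm : v ∈ (stx p enc henc (m+1) x).2 ↔ v ∈ (stx p enc henc m x).2 := by
      by_cases h : ∃ w, enc w = m
      · have hne : v ≠ h.choose := by
          intro he
          have h2 := h.choose_spec
          rw [← he] at h2
          omega
        by_cases hlt : x < (stx p enc henc m x).1 +
            q p enc henc (m + 1) (insert h.choose (stx p enc henc m x).2)
        · rw [stx_succ_pos p enc henc h hlt]
          simp [Finset.mem_insert, hne]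
        · rw [stx_succ_pos' p enc henc h hlt]
      · rw [stx_succ_neg p enc henc h]
    rw [hvm, ih]

lemma etaF_eq_iff {n : ℕ} (x : ℝ) {v : V} (hv : enc v < n) :
    etaF p enc henc x v = true ↔ v ∈ (stx p enc henc n x).2 := by
  rw [etaF, decide_eq_true_eq]
  exact (stx_snd_mem_stable p enc henc (Nat.succ_le_of_lt hv) x (Nat.lt_succ_self _)).symm

lemma etaF_measurable : Measurable (etaF p enc henc) := by
  refine measurable_pi_lambda _ (fun v => ?_)
  have hD : MeasurableSet {x : ℝ | v ∈ (stx p enc henc (enc v + 1) x).2} := by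
    have hrw : {x : ℝ | v ∈ (stx p enc henc (enc v + 1) x).2} =
        ⋃ (T : Finset V) (_ : v ∈ T), {x : ℝ | (stx p enc henc (enc v + 1) x).2 = T} := by
      ext x
      simp only [Set.mem_setOf_eq, Set.mem_iUnion]
      exact ⟨fun hx => ⟨_, hx, rfl⟩, fun ⟨T, hT, hxT⟩ => hxT ▸ hT⟩
    rw [hrw]
    exact MeasurableSet.iUnion fun T => MeasurableSet.iUnion fun _ =>
      (stx_measurable p enc henc _).2 T
  apply measurable_to_countable'
  intro b
  cases b
  · have hrw : (fun x => etaF p enc henc x v) ⁻¹' {false} =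
        {x : ℝ | v ∈ (stx p enc henc (enc v + 1) x).2}ᶜ := by
      ext x; simp [etaF]
    rw [hrw]
    exact hD.compl
  · have hrw : (fun x => etaF p enc henc x v) ⁻¹' {true} =
        {x : ℝ | v ∈ (stx p enc henc (enc v + 1) x).2} := by
      ext x; simp [etaF]
    rw [hrw]
    exact hD

/-- level-`n` interval pieces of `[0,1)`. -/
def SS (n : ℕ) (T : Finset V) : Set ℝ :=
  Set.Ico (0:ℝ) 1 ∩ {x | (stx p enc henc n x).2 = T}

lemma SS_measurable (n : ℕ) (T : Finset V) : MeasurableSet (SS p enc henc n T) :=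
  measurableSet_Ico.inter ((stx_measurable p enc henc n).2 T)

lemma volume_SS (hp : PHyp p) (n : ℕ) {T : Finset V} (hT : T ∈ (Vfin enc henc n).powerset) :
    volume (SS p enc henc n T) = ENNReal.ofReal (q p enc henc n T) := by
  have hdisj : (↑((Vfin enc henc n).powerset) : Set (Finset V)).PairwiseDisjoint
      (fun T => SS p enc henc n T) := by
    intro a _ b _ hab
    refine Set.disjoint_left.2 fun x hxa hxb => hab ?_
    rw [← hxa.2, ← hxb.2]
  have hunion : (⋃ T ∈ (Vfin enc henc n).powerset, SS p enc henc n T) = Set.Ico (0:ℝ) 1 := by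
    ext x
    simp only [Set.mem_iUnion, SS, Set.mem_inter_iff, Set.mem_setOf_eq]
    constructor
    · rintro ⟨T', _, hx, _⟩; exact hx
    · intro hx
      exact ⟨(stx p enc henc n x).2,
        Finset.mem_powerset.2 (stx_snd_subset p enc henc n x), hx, rfl⟩
  have hsum : ∑ T' ∈ (Vfin enc henc n).powerset, volume (SS p enc henc n T') = 1 := by
    rw [← measure_biUnion_finset hdisj (fun T' _ => SS_measurable p enc henc n T'), hunion,
      Real.volume_Ico]
    simp
  have hle : ∀ T' ∈ (Vfin enc henc n).powerset,
      volume (SS p enc henc n T') ≤ ENNReal.ofReal (q p enc henc n T') := by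
    intro T' _
    rcases Set.eq_empty_or_nonempty (SS p enc henc n T') with hSS | ⟨x0, hx0⟩
    · simp [hSS]
    · have hsub : SS p enc henc n T' ⊆
          Set.Ico ((stx p enc henc n x0).1) ((stx p enc henc n x0).1 + q p enc henc n T') := by
        intro x hx
        have hfst : (stx p enc henc n x).1 = (stx p enc henc n x0).1 :=
          stx_fst_eq_of_snd_eq p enc henc hp n hx.1 hx0.1 (by rw [hx.2, hx0.2])
        have hinv := stx_invariant p enc henc hp n hx.1
        constructor
        · rw [← hfst]; exact hinv.1
        · rw [← hfst, ← hx.2]; exact hinv.2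
      calc volume (SS p enc henc n T') ≤ volume (Set.Ico ((stx p enc henc n x0).1)
            ((stx p enc henc n x0).1 + q p enc henc n T')) := measure_mono hsub
        _ = ENNReal.ofReal (q p enc henc n T') := by rw [Real.volume_Ico]; ring_nf
  have hfin : ∀ T' ∈ (Vfin enc henc n).powerset, volume (SS p enc henc n T') ≠ ⊤ :=
    fun T' hT' => ((hle T' hT').trans_lt ENNReal.ofReal_lt_top).ne
  have hsumR : ∑ T' ∈ (Vfin enc henc n).powerset, (volume (SS p enc henc n T')).toReal = 1 := by
    rw [← ENNReal.toReal_sum hfin, hsum, ENNReal.toReal_one]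
  have hleR : ∀ T' ∈ (Vfin enc henc n).powerset,
      (volume (SS p enc henc n T')).toReal ≤ q p enc henc n T' := fun T' hT' =>
    ENNReal.toReal_le_of_le_ofReal (q_nonneg p enc henc hp n T') (hle T' hT')
  have heq : (volume (SS p enc henc n T)).toReal = q p enc henc n T := by
    by_contra hne
    have hlt : ∑ T' ∈ (Vfin enc henc n).powerset, (volume (SS p enc henc n T')).toReal <
        ∑ T' ∈ (Vfin enc henc n).powerset, q p enc henc n T' :=
      Finset.sum_lt_sum hleR ⟨T, hT, lt_of_le_of_ne (hleR T hT) hne⟩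
    rw [hsumR, sum_q_powerset p enc henc hp n] at hlt
    exact lt_irrefl _ hlt
  rw [← heq]
  exact (ENNReal.ofReal_toReal (hfin T hT)).symm


/-- the constructed measure on `V → Bool`. -/
def muC : Measure (V → Bool) :=
  (volume.restrict (Set.Ico (0:ℝ) 1)).map (etaF p enc henc)

lemma muC_isProb : IsProbabilityMeasure (muC p enc henc) := by
  constructor
  rw [muC, Measure.map_apply (etaF_measurable p enc henc) MeasurableSet.univ]
  simp [Real.volume_Ico]

/-- the compatible patterns on `Vfin n` refining the cylinder `(T, F)`. -/
def compat (n : ℕ) (T F : Finset V) : Finset (Finset V) :=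
  (Vfin enc henc n).powerset.filter (fun T' => T ⊆ T' ∧ Disjoint F T')

lemma cyl_snd_unique {n : ℕ} {T' : Finset V} (hT' : T' ⊆ Vfin enc henc n) {η : V → Bool}
    (hη : η ∈ cylSet T' (Vfin enc henc n \ T')) :
    T' = (Vfin enc henc n).filter (fun v => η v = true) := by
  ext v
  simp only [Finset.mem_filter]
  constructor
  · intro hv
    exact ⟨hT' hv, hη.1 v hv⟩
  · rintro ⟨hvn, hvt⟩
    by_contra hvT'
    have : η v = false := hη.2 v (Finset.mem_sdiff.2 ⟨hvn, hvT'⟩)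
    simp [this] at hvt

lemma cylSet_eq_biUnion {n : ℕ} {T F : Finset V} (hT : T ⊆ Vfin enc henc n)
    (hF : F ⊆ Vfin enc henc n) :
    cylSet T F = ⋃ T' ∈ compat enc henc n T F, cylSet T' (Vfin enc henc n \ T') := by
  ext η
  simp only [Set.mem_iUnion, compat, Finset.mem_filter, Finset.mem_powerset]
  constructor
  · intro hη
    refine ⟨(Vfin enc henc n).filter (fun v => η v = true),
      ⟨Finset.filter_subset _ _, ?_, ?_⟩, ?_, ?_⟩
    · intro v hv
      exact Finset.mem_filter.2 ⟨hT hv, hη.1 v hv⟩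
    · refine Finset.disjoint_left.2 fun v hvF hvf => ?_
      have := hη.2 v hvF
      simp [this] at hvf
    · intro v hv
      exact (Finset.mem_filter.1 hv).2
    · intro v hv
      rw [Finset.mem_sdiff, Finset.mem_filter] at hv
      cases hb : η v
      · rfl
      · exact absurd ⟨hv.1, hb⟩ hv.2
  · rintro ⟨T', ⟨hT'sub, hTT', hFT'⟩, hη1, hη2⟩
    constructor
    · intro v hv
      exact hη1 v (hTT' hv)
    · intro v hv
      exact hη2 v (Finset.mem_sdiff.2 ⟨hF hv, Finset.disjoint_left.1 hFT' hv⟩)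

lemma cyl_pairwise_disjoint (n : ℕ) (T F : Finset V) :
    (↑(compat enc henc n T F) : Set (Finset V)).PairwiseDisjoint
      (fun T' => cylSet T' (Vfin enc henc n \ T')) := by
  intro a ha b hb hab
  simp only [compat, Finset.coe_filter, Set.mem_setOf_eq, Finset.mem_powerset] at ha hb
  refine Set.disjoint_left.2 fun η hηa hηb => hab ?_
  rw [cyl_snd_unique enc henc ha.1 hηa, cyl_snd_unique enc henc hb.1 hηb]

/-- partition of a cylinder's measure according to the pattern on `Vfin n`. -/
lemma cyl_partition (μ : Measure (V → Bool)) [IsFiniteMeasure μ] {n : ℕ} {T F : Finset V}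
    (hT : T ⊆ Vfin enc henc n) (hF : F ⊆ Vfin enc henc n) :
    (μ (cylSet T F)).toReal =
      ∑ T' ∈ compat enc henc n T F, (μ (cylSet T' (Vfin enc henc n \ T'))).toReal := by
  rw [cylSet_eq_biUnion enc henc hT hF,
    measure_biUnion_finset (cyl_pairwise_disjoint enc henc n T F)
      (fun T' _ => measurableSet_cylSet _ _),
    ENNReal.toReal_sum (fun T' _ => measure_ne_top μ _)]

/-- the constructed measure gives each cylinder mass the prescribed sum. -/
lemma muC_cylSet (hp : PHyp p) {n : ℕ} {T F : Finset V} (hT : T ⊆ Vfin enc henc n)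
    (hF : F ⊆ Vfin enc henc n) :
    muC p enc henc (cylSet T F) =
      ENNReal.ofReal (∑ T' ∈ compat enc henc n T F, q p enc henc n T') := by
  rw [muC, Measure.map_apply (etaF_measurable p enc henc) (measurableSet_cylSet T F),
    Measure.restrict_apply' measurableSet_Ico]
  have hpre : etaF p enc henc ⁻¹' cylSet T F ∩ Set.Ico (0:ℝ) 1 =
      ⋃ T' ∈ compat enc henc n T F, SS p enc henc n T' := by
    ext x
    simp only [Set.mem_inter_iff, Set.mem_preimage, Set.mem_iUnion, compat,
      Finset.mem_filter, Finset.mem_powerset, SS, Set.mem_setOf_eq]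
    constructor
    · rintro ⟨⟨h1, h2⟩, hx⟩
      refine ⟨(stx p enc henc n x).2, ⟨stx_snd_subset p enc henc n x, ?_, ?_⟩, hx, rfl⟩
      · intro v hv
        exact (etaF_eq_iff p enc henc x ((mem_Vfin enc henc).1 (hT hv))).1 (h1 v hv)
      · refine Finset.disjoint_left.2 fun v hvF hvs => ?_
        have hv2 := (etaF_eq_iff p enc henc x ((mem_Vfin enc henc).1 (hF hvF))).2 hvs
        rw [h2 v hvF] at hv2
        exact Bool.false_ne_true hv2
    · rintro ⟨T', ⟨hT'sub, hTT', hFT'⟩, hx, hsnd⟩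
      refine ⟨⟨?_, ?_⟩, hx⟩
      · intro v hv
        exact (etaF_eq_iff p enc henc x ((mem_Vfin enc henc).1 (hT hv))).2 (hsnd ▸ hTT' hv)
      · intro v hv
        have hvn : v ∉ (stx p enc henc n x).2 := by
          rw [hsnd]
          exact Finset.disjoint_left.1 hFT' hv
        cases hb : etaF p enc henc x v
        · rfl
        · exact absurd ((etaF_eq_iff p enc henc x ((mem_Vfin enc henc).1 (hF hv))).1 hb) hvn
  rw [hpre, measure_biUnion_finset ?_ (fun T' _ => SS_measurable p enc henc n T')]
  · rw [Finset.sum_congr rfl (fun T' hT' => volume_SS p enc henc hp n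
      (by simp only [compat, Finset.mem_filter] at hT'; exact hT'.1)),
      ← ENNReal.ofReal_sum_of_nonneg (fun T' _ => q_nonneg p enc henc hp n T')]
  · intro a ha b hb hab
    refine Set.disjoint_left.2 fun x hxa hxb => hab ?_
    rw [← hxa.2, ← hxb.2]


lemma mem_cylSet {η : V → Bool} {T F : Finset V} :
    η ∈ cylSet T F ↔ (∀ v ∈ T, η v = true) ∧ ∀ v ∈ F, η v = false := Iff.rfl

lemma cylSet_empty_empty : (cylSet (∅ : Finset V) (∅ : Finset V)) = Set.univ := by
  ext η; simp [cylSet]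

/-- splitting a cylinder according to the value at one more site. -/
lemma cyl_split (μ : Measure (V → Bool)) [IsFiniteMeasure μ] {T F : Finset V} {a : V}
    (haT : a ∉ T) (haF : a ∉ F) :
    (μ (cylSet T F)).toReal =
      (μ (cylSet (insert a T) F)).toReal + (μ (cylSet T (insert a F))).toReal := by
  have hun : cylSet T F = cylSet (insert a T) F ∪ cylSet T (insert a F) := by
    ext η
    simp only [Set.mem_union, mem_cylSet]
    constructor
    · rintro ⟨h1, h2⟩
      cases hb : η a
      · refine Or.inr ⟨h1, fun v hv => ?_⟩
        rcases Finset.mem_insert.1 hv with rfl | hv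
        · exact hb
        · exact h2 v hv
      · refine Or.inl ⟨fun v hv => ?_, h2⟩
        rcases Finset.mem_insert.1 hv with rfl | hv
        · exact hb
        · exact h1 v hv
    · rintro (⟨h1, h2⟩ | ⟨h1, h2⟩)
      · exact ⟨fun v hv => h1 v (Finset.mem_insert_of_mem hv), h2⟩
      · exact ⟨h1, fun v hv => h2 v (Finset.mem_insert_of_mem hv)⟩
  have hdisj : Disjoint (cylSet (insert a T) F) (cylSet T (insert a F)) := by
    refine Set.disjoint_left.2 fun η h1 h2 => ?_
    have ht := h1.1 a (Finset.mem_insert_self a T)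
    have hf := h2.2 a (Finset.mem_insert_self a F)
    rw [ht] at hf
    simp at hf
  rw [hun, measure_union hdisj (measurableSet_cylSet _ _),
    ENNReal.toReal_add (measure_ne_top μ _) (measure_ne_top μ _)]

section Limits

variable (ν : ℝ → ProbabilityMeasure (V → Bool))

/-- the limiting cylinder probabilities of the family `ν`. -/
def mlim (T F : Finset V) : ℝ :=
  limUnder atTop (fun t => ((ν t : Measure (V → Bool)) (cylSet T F)).toReal)

variable (hcyl : ∀ A : Finset V, ∃ c : ℝ,
  Tendsto (fun t => ((ν t : Measure (V → Bool)) (cylSet A ∅)).toReal) atTop (𝓝 c))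

include hcyl

lemma tendsto_mlim {T F : Finset V} (h : Disjoint T F) :
    Tendsto (fun t => ((ν t : Measure (V → Bool)) (cylSet T F)).toReal) atTop
      (𝓝 (mlim ν T F)) := by
  suffices h' : ∀ (F T : Finset V), Disjoint T F → ∃ c : ℝ,
      Tendsto (fun t => ((ν t : Measure (V → Bool)) (cylSet T F)).toReal) atTop (𝓝 c) by
    obtain ⟨c, hc⟩ := h' F T h
    rw [mlim, hc.limUnder_eq]
    exact hc
  intro F
  induction F using Finset.induction_on with
  | empty => exact fun T _ => hcyl T
  | @insert a F haF ih =>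
    intro T hd
    have haT : a ∉ T := fun hc => (Finset.disjoint_left.1 hd hc) (Finset.mem_insert_self a F)
    have hdTF : Disjoint T F := hd.mono_right (Finset.subset_insert a F)
    have hdaTF : Disjoint (insert a T) F := by
      refine Finset.disjoint_left.2 fun v hv hvF => ?_
      rcases Finset.mem_insert.1 hv with rfl | hv
      · exact haF hvF
      · exact Finset.disjoint_left.1 hdTF hv hvF
    obtain ⟨c1, hc1⟩ := ih T hdTF
    obtain ⟨c2, hc2⟩ := ih (insert a T) hdaTF
    refine ⟨c1 - c2, (hc1.sub hc2).congr (fun t => ?_)⟩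
    have hsp := cyl_split (μ := (ν t : Measure (V → Bool))) haT haF
    linarith

lemma mlim_zero : mlim ν ∅ ∅ = 1 := by
  have heq : (fun t => ((ν t : Measure (V → Bool)) (cylSet (∅ : Finset V) ∅)).toReal) =
      fun _ => (1:ℝ) := by
    funext t
    rw [cylSet_empty_empty]
    simp
  rw [mlim, heq]
  exact Filter.Tendsto.limUnder_eq tendsto_const_nhds

lemma mlim_nonneg (T F : Finset V) (h : Disjoint T F) : 0 ≤ mlim ν T F :=
  ge_of_tendsto' (tendsto_mlim ν hcyl h) (fun _ => ENNReal.toReal_nonneg)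

lemma mlim_add {T F : Finset V} {a : V} (hd : Disjoint T F) (haT : a ∉ T) (haF : a ∉ F) :
    mlim ν T F = mlim ν (insert a T) F + mlim ν T (insert a F) := by
  have hdaTF : Disjoint (insert a T) F := by
    refine Finset.disjoint_left.2 fun v hv hvF => ?_
    rcases Finset.mem_insert.1 hv with rfl | hv
    · exact haF hvF
    · exact Finset.disjoint_left.1 hd hv hvF
  have hdTaF : Disjoint T (insert a F) := by
    refine Finset.disjoint_left.2 fun v hv hvF => ?_
    rcases Finset.mem_insert.1 hvF with rfl | hvF
    · exact haT hv
    · exact Finset.disjoint_left.1 hd hv hvF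
  refine tendsto_nhds_unique (tendsto_mlim ν hcyl hd) ?_
  refine (((tendsto_mlim ν hcyl hdaTF).add (tendsto_mlim ν hcyl hdTaF)).congr (fun t => ?_))
  exact (cyl_split (μ := (ν t : Measure (V → Bool))) haT haF).symm

lemma mlim_PHyp : PHyp (mlim ν) where
  zero := mlim_zero ν hcyl
  nonneg := mlim_nonneg ν hcyl
  add := fun T F v hd hvT hvF => mlim_add ν hcyl hd hvT hvF

lemma mlim_partition {n : ℕ} {T F : Finset V} (hT : T ⊆ Vfin enc henc n)
    (hF : F ⊆ Vfin enc henc n) (hd : Disjoint T F) :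
    mlim ν T F = ∑ T' ∈ compat enc henc n T F, mlim ν T' (Vfin enc henc n \ T') := by
  refine tendsto_nhds_unique (tendsto_mlim ν hcyl hd) ?_
  have hterm : Tendsto (fun t => ∑ T' ∈ compat enc henc n T F,
      ((ν t : Measure (V → Bool)) (cylSet T' (Vfin enc henc n \ T'))).toReal) atTop
      (𝓝 (∑ T' ∈ compat enc henc n T F, mlim ν T' (Vfin enc henc n \ T'))) :=
    tendsto_finset_sum _ (fun T' _ => tendsto_mlim ν hcyl Finset.disjoint_sdiff)
  exact hterm.congr (fun t => (cyl_partition enc henc (ν t : Measure (V → Bool)) hT hF).symm)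

/-- the constructed measure has the limiting cylinder probabilities. -/
lemma muC_mlim_cylSet (T F : Finset V) (hd : Disjoint T F) :
    muC (mlim ν) enc henc (cylSet T F) = ENNReal.ofReal (mlim ν T F) := by
  set n := ((T ∪ F).sup enc) + 1 with hn
  have hT : T ⊆ Vfin enc henc n := fun v hv => (mem_Vfin enc henc).2
    (Nat.lt_succ_of_le (Finset.le_sup (Finset.mem_union_left F hv)))
  have hF : F ⊆ Vfin enc henc n := fun v hv => (mem_Vfin enc henc).2
    (Nat.lt_succ_of_le (Finset.le_sup (Finset.mem_union_right T hv)))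
  rw [muC_cylSet (mlim ν) enc henc (mlim_PHyp ν hcyl) hT hF,
    mlim_partition enc henc ν hcyl hT hF hd]
  rfl

end Limits

/-- integral of a function depending only on coordinates in `Vfin n`. -/
lemma integral_cyl_decomp (μ : Measure (V → Bool)) [IsProbabilityMeasure μ]
    (g : (V → Bool) → ℝ) (n : ℕ)
    (hg : ∀ η η' : V → Bool, (∀ v ∈ Vfin enc henc n, η v = η' v) → g η = g η') :
    ∫ η, g η ∂μ = ∑ T' ∈ (Vfin enc henc n).powerset,
      g (fun v => decide (v ∈ T')) * (μ (cylSet T' (Vfin enc henc n \ T'))).toReal := by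
  have hpt : ∀ η, g η = ∑ T' ∈ (Vfin enc henc n).powerset,
      Set.indicator (cylSet T' (Vfin enc henc n \ T'))
        (fun _ => g (fun v => decide (v ∈ T'))) η := by
    intro η
    set T0 := (Vfin enc henc n).filter (fun v => η v = true) with hT0
    have hT0m : T0 ∈ (Vfin enc henc n).powerset :=
      Finset.mem_powerset.2 (Finset.filter_subset _ _)
    have hηT0 : η ∈ cylSet T0 (Vfin enc henc n \ T0) := by
      constructor
      · intro v hv
        exact (Finset.mem_filter.1 hv).2
      · intro v hv
        rw [Finset.mem_sdiff] at hv
        cases hb : η v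
        · rfl
        · exact absurd (Finset.mem_filter.2 ⟨hv.1, hb⟩) hv.2
    rw [Finset.sum_eq_single_of_mem T0 hT0m ?_]
    · rw [Set.indicator_of_mem hηT0]
      refine hg η _ (fun v hv => ?_)
      by_cases hvt : v ∈ T0
      · rw [(Finset.mem_filter.1 hvt).2]
        simp [hvt]
      · have hfalse : η v = false := by
          have : ¬ (η v = true) := fun hc => hvt (Finset.mem_filter.2 ⟨hv, hc⟩)
          exact Bool.not_eq_true _ ▸ (by simpa using this)
        rw [hfalse]
        simp [hvt]
    · intro b hb hne
      refine Set.indicator_of_notMem (fun hηb => hne ?_) _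
      rw [cyl_snd_unique enc henc (Finset.mem_powerset.1 hb) hηb]
  rw [integral_congr_ae (Filter.Eventually.of_forall hpt),
    integral_finset_sum _ (fun T' _ => (integrable_const _).indicator (measurableSet_cylSet _ _))]
  refine Finset.sum_congr rfl (fun T' _ => ?_)
  rw [integral_indicator_const _ (measurableSet_cylSet _ _), smul_eq_mul, mul_comm]
  rfl

/-- uniqueness: a probability measure on `V → Bool` is determined by the values on
`cylSet A ∅`. -/
lemma measure_ext_cyl (μ1 μ2 : Measure (V → Bool)) [IsProbabilityMeasure μ1]
    [IsProbabilityMeasure μ2]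
    (h : ∀ A : Finset V, μ1 (cylSet A ∅) = μ2 (cylSet A ∅)) : μ1 = μ2 := by
  set C : Set (Set (V → Bool)) := {s | ∃ A : Finset V, s = cylSet A ∅} with hC
  have hcylmeas : ∀ b : Bool, ∀ v : V,
      MeasurableSet[MeasurableSpace.generateFrom C] ((fun η : V → Bool => η v) ⁻¹' {b}) := by
    intro b v
    have htrue : (fun η : V → Bool => η v) ⁻¹' {true} = cylSet {v} ∅ := by
      ext η; simp [cylSet]
    cases b
    · have : (fun η : V → Bool => η v) ⁻¹' {false} = (cylSet {v} ∅)ᶜ := by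
        rw [← htrue]
        ext η
        simp
      rw [this]
      exact (MeasurableSpace.measurableSet_generateFrom
        (show cylSet {v} ∅ ∈ C from ⟨{v}, rfl⟩)).compl
    · rw [htrue]
      exact MeasurableSpace.measurableSet_generateFrom
        (show cylSet {v} ∅ ∈ C from ⟨{v}, rfl⟩)
  have hgen : (inferInstance : MeasurableSpace (V → Bool)) =
      MeasurableSpace.generateFrom C := by
    refine le_antisymm ?_ (MeasurableSpace.generateFrom_le ?_)
    · have hcomp : ∀ v : V, Measurable[MeasurableSpace.generateFrom C]
          (fun η : V → Bool => η v) :=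
        fun v => @measurable_to_countable' Bool (V → Bool) _ _
          (MeasurableSpace.generateFrom C) (fun η : V → Bool => η v)
          (fun b => hcylmeas b v)
      exact iSup_le fun v => Measurable.comap_le (hcomp v)
    · rintro s ⟨A, rfl⟩
      exact measurableSet_cylSet A ∅
  have hpi : IsPiSystem C := by
    rintro s ⟨A, rfl⟩ t ⟨B, rfl⟩ -
    refine ⟨A ∪ B, ?_⟩
    ext η
    simp only [Set.mem_inter_iff, mem_cylSet, cylSet, Set.mem_setOf_eq, Finset.mem_union]
    constructor
    · rintro ⟨⟨h1, -⟩, ⟨h2, -⟩⟩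
      exact ⟨fun v hv => hv.elim (h1 v) (h2 v), fun v hv => absurd hv (Finset.notMem_empty v)⟩
    · rintro ⟨h1, -⟩
      exact ⟨⟨fun v hv => h1 v (Or.inl hv), fun v hv => absurd hv (Finset.notMem_empty v)⟩,
        ⟨fun v hv => h1 v (Or.inr hv), fun v hv => absurd hv (Finset.notMem_empty v)⟩⟩
  refine MeasureTheory.ext_of_generate_finite C hgen hpi ?_ ?_
  · rintro s ⟨A, rfl⟩
    exact h A
  · simp

/-- uniform approximation of a bounded continuous function by a cylinder function. -/
lemma exists_finset_approx (f : (V → Bool) →ᵇ ℝ) {δ : ℝ} (hδ : 0 < δ) :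
    ∃ F0 : Finset V, ∀ η η' : V → Bool, (∀ v ∈ F0, η v = η' v) → |f η - f η'| ≤ 2 * δ := by
  have hnb : ∀ η : V → Bool, ∃ F : Finset V,
      ∀ η', (∀ v ∈ F, η' v = η v) → |f η' - f η| < δ := by
    intro η
    have hmem : {η' : V → Bool | |f η' - f η| < δ} ∈ 𝓝 η := by
      have hc := (map_continuous f).continuousAt (x := η) (Metric.ball_mem_nhds (f η) hδ)
      simpa [Metric.ball, Real.dist_eq] using hc
    rw [nhds_pi, Filter.mem_pi] at hmem
    obtain ⟨I, hIfin, ts, hts, hsub⟩ := hmem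
    refine ⟨hIfin.toFinset, fun η' hagree => ?_⟩
    apply hsub
    intro v hv
    have heq : η' v = η v := hagree v (hIfin.mem_toFinset.2 hv)
    rw [heq]
    exact mem_of_mem_nhds (hts v)
  choose Fs hFs using hnb
  have hopen : ∀ η : V → Bool, IsOpen {η' : V → Bool | ∀ v ∈ Fs η, η' v = η v} := by
    intro η
    have hrw : {η' : V → Bool | ∀ v ∈ Fs η, η' v = η v} =
        ⋂ v ∈ (Fs η : Set V), (fun η' : V → Bool => η' v) ⁻¹' {η v} := by
      ext η'; simp
    rw [hrw]
    exact (Fs η).finite_toSet.isOpen_biInter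
      (fun v _ => (continuous_apply v).isOpen_preimage _ (isOpen_discrete _))
  obtain ⟨s, hs⟩ := IsCompact.elim_finite_subcover isCompact_univ
    (fun η : V → Bool => {η' : V → Bool | ∀ v ∈ Fs η, η' v = η v}) hopen
    (fun η _ => Set.mem_iUnion.2 ⟨η, fun v _ => rfl⟩)
  refine ⟨s.biUnion Fs, fun η η' hagree => ?_⟩
  obtain ⟨η0, hη0s, hη0⟩ : ∃ η0 ∈ s, ∀ v ∈ Fs η0, η v = η0 v := by
    have hmem := hs (Set.mem_univ η)
    simpa using hmem
  have h1 : |f η - f η0| < δ := hFs η0 η hη0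
  have h2 : |f η' - f η0| < δ := by
    refine hFs η0 η' (fun v hv => ?_)
    rw [← hagree v (Finset.mem_biUnion.2 ⟨η0, hη0s, hv⟩)]
    exact hη0 v hv
  calc |f η - f η'| ≤ |f η - f η0| + |f η0 - f η'| := abs_sub_le _ _ _
    _ = |f η - f η0| + |f η' - f η0| := by rw [abs_sub_comm (f η0)]
    _ ≤ 2 * δ := by linarith

end Stmt5Aux

open Stmt5Aux in
/-- the values `E_A[α^{|A_∞|}]` of the coalescing random walk system
determine a unique probability measure `μ_α` on `{0,1}^V` with
`μ_α(η ≡ 1 on A) = E_A[α^{|A_∞|}]`, and the law of the voter model started from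
the Bernoulli(α) product measure converges weakly to `μ_α`. -/
theorem stmt5 {V : Type*} [Countable V] [DecidableEq V]
    (G : SimpleGraph V) [G.LocallyFinite] (hconn : G.Connected)
    (α : ℝ) (hα : α ∈ Set.Icc (0:ℝ) 1)
    {Ω : Type*} [MeasurableSpace Ω] (P : Measure Ω) [IsProbabilityMeasure P]
    -- the coalescing random walk system started from each finite `A ⊆ V`
    (C : Finset V → ℝ → Ω → Finset V)
    (hC : ∀ A, IsCTMC P (coalRate G) (C A))
    (hC0 : ∀ A ω, C A 0 ω = A)
    -- `|A_∞|`: the a.s. limit of the (non-increasing) particle number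
    (N : Finset V → Ω → ℕ)
    (hN : ∀ A, ∀ᵐ ω ∂P, ∀ᶠ t : ℝ in atTop, (C A t ω).card = N A ω)
    -- `ν t` is the law of the voter model at time `t` started from `π_α`;
    -- by duality it satisfies `ν_t(η ≡ 1 on A) = E_A[α^{|A_t|}]`.
    (ν : ℝ → ProbabilityMeasure (V → Bool))
    (hdual : ∀ t : ℝ, 0 ≤ t → ∀ A : Finset V,
      (ν t : Measure (V → Bool)) {η | ∀ x ∈ A, η x = true} =
        ENNReal.ofReal (∫ ω, α ^ ((C A t ω).card) ∂P)) :
    ∃ μα : ProbabilityMeasure (V → Bool),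
      (∀ A : Finset V,
        (μα : Measure (V → Bool)) {η | ∀ x ∈ A, η x = true} =
          ENNReal.ofReal (∫ ω, α ^ (N A ω) ∂P)) ∧
      (∀ μ' : ProbabilityMeasure (V → Bool),
        (∀ A : Finset V,
          (μ' : Measure (V → Bool)) {η | ∀ x ∈ A, η x = true} =
            ENNReal.ofReal (∫ ω, α ^ (N A ω) ∂P)) → μ' = μα) ∧
      Tendsto ν atTop (nhds μα) := by
  classical
  obtain ⟨enc, henc⟩ := Countable.exists_injective_nat V
  have hα0 : 0 ≤ α := hα.1
  have hα1 : α ≤ 1 := hα.2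
  set L : Finset V → ℝ := fun A => ∫ ω, α ^ (N A ω) ∂P with hL
  -- dominated convergence of the dual expectations
  have hDC : ∀ A : Finset V,
      Tendsto (fun t => ∫ ω, α ^ ((C A t ω).card) ∂P) atTop (𝓝 (L A)) := by
    intro A
    refine tendsto_integral_filter_of_dominated_convergence (fun _ => (1:ℝ))
      (Filter.Eventually.of_forall (fun t => ?_))
      (Filter.Eventually.of_forall (fun t => ?_)) (integrable_const _) ?_
    · exact ((measurable_from_top (f := fun B : Finset V => α ^ B.card)).comp ((hC A).1 t)).aestronglyMeasurable
    · refine Filter.Eventually.of_forall (fun ω => ?_)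
      rw [Real.norm_eq_abs, abs_pow, abs_of_nonneg hα0]
      exact pow_le_one₀ hα0 hα1
    · filter_upwards [hN A] with ω hω
      refine Tendsto.congr' ?_ tendsto_const_nhds
      filter_upwards [hω] with t ht
      rw [ht]
  have hsetA : ∀ A : Finset V,
      {η : V → Bool | ∀ x ∈ A, η x = true} = cylSet A ∅ := by
    intro A; ext η; simp [cylSet]
  -- convergence of cylinder probabilities
  have hcylL : ∀ A : Finset V, Tendsto
      (fun t => ((ν t : Measure (V → Bool)) (cylSet A ∅)).toReal) atTop (𝓝 (L A)) := by
    intro A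
    refine (hDC A).congr' ?_
    filter_upwards [eventually_ge_atTop (0:ℝ)] with t ht
    rw [← hsetA A, hdual t ht A,
      ENNReal.toReal_ofReal (integral_nonneg (fun ω => pow_nonneg hα0 _))]
  have hcyl : ∀ A : Finset V, ∃ c : ℝ, Tendsto
      (fun t => ((ν t : Measure (V → Bool)) (cylSet A ∅)).toReal) atTop (𝓝 c) :=
    fun A => ⟨L A, hcylL A⟩
  have hmlim : ∀ A : Finset V, mlim ν A ∅ = L A := fun A =>
    tendsto_nhds_unique (tendsto_mlim ν hcyl (Finset.disjoint_empty_right A)) (hcylL A)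
  have hprob : IsProbabilityMeasure (muC (mlim ν) enc henc) := muC_isProb _ enc henc
  have hval : ∀ A : Finset V,
      muC (mlim ν) enc henc {η : V → Bool | ∀ x ∈ A, η x = true} =
        ENNReal.ofReal (L A) := by
    intro A
    rw [hsetA A, muC_mlim_cylSet enc henc ν hcyl A ∅ (Finset.disjoint_empty_right A), hmlim A]
  refine ⟨⟨muC (mlim ν) enc henc, hprob⟩, fun A => hval A, ?_, ?_⟩
  · -- uniqueness
    intro μ' hμ'
    apply ProbabilityMeasure.toMeasure_injective
    apply measure_ext_cyl (μ1 := (μ' : Measure (V → Bool))) (μ2 := muC (mlim ν) enc henc)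
    intro A
    rw [← hsetA A]
    show (μ' : Measure (V → Bool)) _ = _
    rw [hμ' A]
    exact (hval A).symm
  · -- weak convergence
    refine ProbabilityMeasure.tendsto_iff_forall_integral_tendsto.mpr ?_
    intro f
    rw [Metric.tendsto_nhds]
    intro ε hε
    set δ := ε / 6 with hδdef
    have hδ : 0 < δ := by positivity
    obtain ⟨F0, hF0⟩ := exists_finset_approx f hδ
    set n := (F0.sup enc) + 1 with hn
    set retr : (V → Bool) → (V → Bool) := fun η v => if enc v < n then η v else false
      with hretr
    set g : (V → Bool) → ℝ := fun η => f (retr η) with hg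
    have hgdep : ∀ η η' : V → Bool,
        (∀ v ∈ Vfin enc henc n, η v = η' v) → g η = g η' := by
      intro η η' hagree
      have hre : retr η = retr η' := by
        funext v
        by_cases hv : enc v < n
        · simp only [hretr, if_pos hv]
          exact hagree v ((mem_Vfin enc henc).2 hv)
        · simp [hretr, hv]
      show f (retr η) = f (retr η')
      rw [hre]
    have hfg : ∀ η, |f η - g η| ≤ 2 * δ := by
      intro η
      refine hF0 η (retr η) (fun v hv => ?_)
      simp [hretr, show enc v < n from Nat.lt_succ_of_le (Finset.le_sup hv)]
    have hretrm : Measurable retr := by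
      refine measurable_pi_lambda _ (fun v => ?_)
      by_cases hv : enc v < n
      · simpa [hretr, hv] using measurable_pi_apply v
      · simpa [hretr, hv] using measurable_const
    have hgmeas : Measurable g := (map_continuous f).measurable.comp hretrm
    have hgint : ∀ (μ : Measure (V → Bool)) [IsProbabilityMeasure μ], Integrable g μ := by
      intro μ _
      refine Integrable.mono' (integrable_const ‖f‖) hgmeas.aestronglyMeasurable ?_
      exact Filter.Eventually.of_forall (fun η => f.norm_coe_le_norm (retr η))
    have hIdiff : ∀ (μ : Measure (V → Bool)) [IsProbabilityMeasure μ],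
        |(∫ η, f η ∂μ) - ∫ η, g η ∂μ| ≤ 2 * δ := by
      intro μ _
      rw [← integral_sub (f.integrable μ) (hgint μ)]
      have hb := norm_integral_le_of_norm_le_const (μ := μ)
        (f := fun η => f η - g η) (C := 2*δ)
        (Filter.Eventually.of_forall (fun η => by rw [Real.norm_eq_abs]; exact hfg η))
      simpa [Real.norm_eq_abs] using hb
    have hdec : ∀ (μ : Measure (V → Bool)) [IsProbabilityMeasure μ],
        ∫ η, g η ∂μ = ∑ T' ∈ (Vfin enc henc n).powerset,
          g (fun v => decide (v ∈ T')) * (μ (cylSet T' (Vfin enc henc n \ T'))).toReal :=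
      fun μ _ => integral_cyl_decomp enc henc μ g n hgdep
    have hgconv : Tendsto (fun t => ∫ η, g η ∂(ν t : Measure (V → Bool))) atTop
        (𝓝 (∫ η, g η ∂(muC (mlim ν) enc henc))) := by
      have htarget : ∫ η, g η ∂(muC (mlim ν) enc henc) =
          ∑ T' ∈ (Vfin enc henc n).powerset,
            g (fun v => decide (v ∈ T')) * mlim ν T' (Vfin enc henc n \ T') := by
        rw [hdec _]
        refine Finset.sum_congr rfl (fun T' _ => ?_)
        rw [muC_mlim_cylSet enc henc ν hcyl T' _ Finset.disjoint_sdiff,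
          ENNReal.toReal_ofReal (mlim_nonneg ν hcyl _ _ Finset.disjoint_sdiff)]
      rw [htarget]
      refine Tendsto.congr (fun t => (hdec (ν t : Measure (V → Bool))).symm) ?_
      exact tendsto_finset_sum _ (fun T' _ =>
        (tendsto_mlim ν hcyl Finset.disjoint_sdiff).const_mul _)
    filter_upwards [Metric.tendsto_nhds.1 hgconv δ hδ] with t ht
    have h1 := hIdiff (ν t : Measure (V → Bool))
    have h2 := hIdiff (muC (mlim ν) enc henc)
    rw [Real.dist_eq] at ht ⊢
    have hdecomp : (∫ η, f η ∂(ν t : Measure (V → Bool))) -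
        (∫ η, f η ∂(muC (mlim ν) enc henc)) =
        ((∫ η, f η ∂(ν t : Measure (V → Bool))) - ∫ η, g η ∂(ν t : Measure (V → Bool))) +
        ((∫ η, g η ∂(ν t : Measure (V → Bool))) - ∫ η, g η ∂(muC (mlim ν) enc henc)) +
        ((∫ η, g η ∂(muC (mlim ν) enc henc)) - ∫ η, f η ∂(muC (mlim ν) enc henc)) := by
      ring
    calc |(∫ η, f η ∂(ν t : Measure (V → Bool))) - ∫ η, f η ∂(muC (mlim ν) enc henc)|
        ≤ |(∫ η, f η ∂(ν t : Measure (V → Bool))) - ∫ η, g η ∂(ν t : Measure (V → Bool))| +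
          |(∫ η, g η ∂(ν t : Measure (V → Bool))) - ∫ η, g η ∂(muC (mlim ν) enc henc)| +
          |(∫ η, g η ∂(muC (mlim ν) enc henc)) - ∫ η, f η ∂(muC (mlim ν) enc henc)| := by
          rw [hdecomp]
          exact (abs_add_le _ _).trans (by gcongr; exact abs_add_le _ _)
      _ < ε := by
          have h2' : |(∫ η, g η ∂(muC (mlim ν) enc henc)) -
              ∫ η, f η ∂(muC (mlim ν) enc henc)| ≤ 2 * δ := by
            rw [abs_sub_comm]; exact h2
          rw [hδdef] at *
          linarith
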